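/- Let Σ ≻ 0 and M₁, …, M_k ⪰ 0 be d×d matrices. The set function f(T) := log det(Σ⁻¹ + ∑_{i∈T} M_i) is submodular: for T₁ ⊆ T₂ and j ∉ T₂, f(T₁ ∪ {j}) − f(T₁) ≥ f(T₂ ∪ {j}) − f(T₂). -/

import Mathlib

/-!
Write the new measurement as `M = Wᴴ W`. The matrix determinant lemma gives
`det (X + M) = det X * det (1 + W X⁻¹ Wᴴ)`, so the gain `log det (X + M) - log det X` is
`log det (1 + W X⁻¹ Wᴴ)`. Adding measurements enlarges `X` in the Loewner order, which shrinks
`X⁻¹`, hence `W X⁻¹ Wᴴ`, hence (determinant being monotone on positive definite matrices) the gain.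
-/

open Matrix
open scoped MatrixOrder

namespace Matrix

variable {n : Type*} [Fintype n] [DecidableEq n]

theorem PosSemidef.one_le_det_one_add {Q : Matrix n n ℝ} (hQ : Q.PosSemidef) :
    1 ≤ (1 + Q).det := by
  have hcfc : 1 + Q = cfc (fun x : ℝ => 1 + x) Q := by
    rw [cfc_add .., cfc_const_one .., cfc_id' ..]
  rw [hcfc, hQ.isHermitian.cfc_eq]
  simp only [IsHermitian.cfc, RCLike.ofReal_real_eq_id, CompTriple.comp_eq, det_map,
    det_diagonal, Function.comp_apply]
  exact Finset.one_le_prod fun i _ => by linarith [hQ.eigenvalues_nonneg i]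

theorem PosDef.det_le_det {X Y : Matrix n n ℝ} (hX : X.PosDef) (hXY : X ≤ Y) :
    X.det ≤ Y.det := by
  obtain ⟨W, hW⟩ := CStarAlgebra.nonneg_iff_eq_star_mul_self.mp (sub_nonneg.mpr hXY)
  have hY : Y = X + Wᴴ * W := by rw [← star_eq_conjTranspose, ← hW]; abel
  rw [hY, det_add_mul _ _ ((isUnit_iff_isUnit_det X).mp hX.isUnit)]
  exact le_mul_of_one_le_right hX.det_pos.le
    (hX.inv.posSemidef.mul_mul_conjTranspose_same W).one_le_det_one_add

/-- Both Schur complements of the block matrix `[[B, 1], [1, A⁻¹]]` test its positivity: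
one is `B - A`, the other `A⁻¹ - B⁻¹`. -/
theorem PosDef.inv_le_inv {A B : Matrix n n ℝ} (hA : A.PosDef) (hAB : A ≤ B) :
    B⁻¹ ≤ A⁻¹ := by
  have hB : B.PosDef := by simpa using hA.add_posSemidef (le_iff.mp hAB)
  have := hA.isUnit.invertible
  have := hA.inv.isUnit.invertible
  have := hB.isUnit.invertible
  have hblock : (fromBlocks B 1 1ᴴ A⁻¹).PosSemidef := by
    rw [PosDef.fromBlocks₂₂ _ _ hA.inv]
    simpa [inv_inv_of_invertible, le_iff] using hAB
  rw [PosDef.fromBlocks₁₁ _ _ hB] at hblock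
  simpa [le_iff] using hblock

theorem PosDef.det_add_add_mul_det_le {A M N : Matrix n n ℝ} (hA : A.PosDef)
    (hM : M.PosSemidef) (hN : N.PosSemidef) :
    (A + N + M).det * A.det ≤ (A + M).det * (A + N).det := by
  obtain ⟨W, rfl⟩ := CStarAlgebra.nonneg_iff_eq_star_mul_self.mp hM.nonneg
  have hAN : (A + N).PosDef := hA.add_posSemidef hN
  have hdet {X : Matrix n n ℝ} (hX : X.PosDef) :
      (X + star W * W).det = X.det * (1 + W * X⁻¹ * star W).det :=
    det_add_mul _ _ ((isUnit_iff_isUnit_det X).mp hX.isUnit)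
  have hinv : (A + N)⁻¹ ≤ A⁻¹ := hA.inv_le_inv (le_add_of_nonneg_right hN.nonneg)
  have hgain : (1 + W * (A + N)⁻¹ * star W).det ≤ (1 + W * A⁻¹ * star W).det :=
    (PosDef.one.add_posSemidef (hAN.inv.posSemidef.mul_mul_conjTranspose_same W)).det_le_det
      (add_le_add_right (star_right_conjugate_le_conjugate hinv W) 1)
  rw [hdet hA, hdet hAN]
  calc (A + N).det * (1 + W * (A + N)⁻¹ * star W).det * A.det
      = (A.det * (A + N).det) * (1 + W * (A + N)⁻¹ * star W).det := by ring
    _ ≤ (A.det * (A + N).det) * (1 + W * A⁻¹ * star W).det := by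
      gcongr
      exact (mul_pos hA.det_pos hAN.det_pos).le
    _ = A.det * (1 + W * A⁻¹ * star W).det * (A + N).det := by ring

end Matrix

/-- submodularity of the log-det information gain of the Kalman
measurement update. -/
theorem kalman_logdet_submodular {d k : ℕ}
    (Sig : Matrix (Fin d) (Fin d) ℝ) (hSig : Sig.PosDef)
    (Ms : Fin k → Matrix (Fin d) (Fin d) ℝ) (hMs : ∀ i, (Ms i).PosSemidef)
    (f : Finset (Fin k) → ℝ)
    (hf : ∀ T : Finset (Fin k), f T = Real.log (Sig⁻¹ + ∑ i ∈ T, Ms i).det) :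
    ∀ T₁ T₂ : Finset (Fin k), T₁ ⊆ T₂ → ∀ j ∉ T₂,
      f (insert j T₁) - f T₁ ≥ f (insert j T₂) - f T₂ := by
  intro T₁ T₂ hT j hj
  have hsum (T : Finset (Fin k)) : (∑ i ∈ T, Ms i).PosSemidef :=
    posSemidef_sum T fun i _ => hMs i
  set A := Sig⁻¹ + ∑ i ∈ T₁, Ms i
  set N := ∑ i ∈ T₂ \ T₁, Ms i
  have hA : A.PosDef := hSig.inv.add_posSemidef (hsum T₁)
  have hAN : (A + N).PosDef := hA.add_posSemidef (hsum _)
  have h₁ : Sig⁻¹ + ∑ i ∈ insert j T₁, Ms i = A + Ms j := by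
    rw [Finset.sum_insert fun h => hj (hT h)]; simp only [A]; abel
  have h₂ : Sig⁻¹ + ∑ i ∈ T₂, Ms i = A + N := by
    rw [← Finset.sum_sdiff hT]; simp only [A, N]; abel
  have h₃ : Sig⁻¹ + ∑ i ∈ insert j T₂, Ms i = A + N + Ms j := by
    rw [Finset.sum_insert hj, ← h₂]; abel
  have hlog := Real.log_le_log (mul_pos (hAN.add_posSemidef (hMs j)).det_pos hA.det_pos)
    (hA.det_add_add_mul_det_le (hMs j) (hsum (T₂ \ T₁)))
  rw [Real.log_mul (hAN.add_posSemidef (hMs j)).det_pos.ne' hA.det_pos.ne',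
    Real.log_mul (hA.add_posSemidef (hMs j)).det_pos.ne' hAN.det_pos.ne'] at hlog
  rw [hf, hf, hf, hf, h₁, h₂, h₃]
  linarith
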